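/- arXiv:2009.01589 — 7 statements merged into one kernel-verified Lean document; each statement's English description precedes it below -/
import Mathlib

section
/- For integers D ≥ 1 and d ≥ 0, the number of lattice points z in ℤ^D with ‖z‖₁ ≤ d equals ∑_{k=0}^{D} C(D,k)·C(d+D-k, D), where C(n,k) denotes the binomial coefficient (with C(n,k)=0 when n<k). -/
/-!
Record for each `z ∈ ℤ^D` the set `S` of its negative coordinates and the vector
`a ∈ ℕ^D` with `a i = |z i| - [i ∈ S]`; this is a bijection, and `‖z‖₁ = |S| + ∑ a i`.
For a fixed `S`, stars and bars with one slack variable counts the `a` with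
`∑ a i ≤ d - |S|` as `C(d + D - |S|, D)` (zero when `|S| > d`), and there are `C(D, k)`
sets `S` of size `k`.
-/

open Finset

variable {ι : Type*} [Fintype ι]

theorem card_fun_nat_sum_eq (m : ℕ) :
    Nat.card {a : ι → ℕ // ∑ i, a i = m} = (Fintype.card ι + m - 1).choose m := by
  classical
  rw [← Nat.card_congr (Sym.equivNatSumOfFintype ι m), Nat.card_eq_fintype_card,
    Sym.card_sym_eq_choose]

def sumEqOptionEquivSumLe (m : ℕ) :
    {b : Option ι → ℕ // ∑ i, b i = m} ≃ {a : ι → ℕ // ∑ i, a i ≤ m} where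
  toFun b := ⟨fun i => b.1 (some i), by
    have := b.2; rw [Fintype.sum_option] at this; dsimp only; omega⟩
  invFun a := ⟨fun o => o.elim (m - ∑ i, a.1 i) a.1, by
    have := a.2; rw [Fintype.sum_option]; simp only [Option.elim]; omega⟩
  left_inv b := by
    ext (_ | i)
    · have := b.2; rw [Fintype.sum_option] at this; simp only [Option.elim]; omega
    · rfl
  right_inv a := rfl

theorem card_fun_nat_sum_le (m : ℕ) :
    Nat.card {a : ι → ℕ // ∑ i, a i ≤ m} =
      (m + Fintype.card ι).choose (Fintype.card ι) := by
  rw [← Nat.card_congr (sumEqOptionEquivSumLe m), card_fun_nat_sum_eq, Fintype.card_option,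
    ← Nat.choose_symm_add]
  congr 1; omega

instance finite_fun_nat_sum_le (m : ℕ) : Finite {a : ι → ℕ // ∑ i, a i ≤ m} := by
  classical
  exact .of_equiv _ ((Sym.equivNatSumOfFintype (Option ι) m).trans (sumEqOptionEquivSumLe m))

theorem card_fun_nat_add_sum_le {c : ℕ} (d : ℕ) (hc : c ≤ Fintype.card ι) :
    Nat.card {a : ι → ℕ // c + ∑ i, a i ≤ d} =
      (d + Fintype.card ι - c).choose (Fintype.card ι) := by
  rcases le_or_gt c d with hcd | hdc
  · have e : {a : ι → ℕ // c + ∑ i, a i ≤ d} ≃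
        {a : ι → ℕ // ∑ i, a i ≤ d - c} :=
      Equiv.subtypeEquivRight fun a => by omega
    rw [Nat.card_congr e, card_fun_nat_sum_le]
    congr 1; omega
  · have : IsEmpty {a : ι → ℕ // c + ∑ i, a i ≤ d} := ⟨fun a => by have := a.2; omega⟩
    rw [Nat.card_of_isEmpty, Nat.choose_eq_zero_of_lt (by omega)]

variable [DecidableEq ι]

def signMagnitudeEquiv : (ι → ℤ) ≃ Finset ι × (ι → ℕ) where
  toFun z := (univ.filter (z · < 0), fun i => if z i < 0 then (z i).natAbs - 1 else (z i).natAbs)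
  invFun p i := if i ∈ p.1 then Int.negSucc (p.2 i) else p.2 i
  left_inv z := by funext i; by_cases h : z i < 0 <;> simp [h, Int.negSucc_eq] <;> omega
  right_inv p := by ext i <;> by_cases h : i ∈ p.1 <;> simp [h, Int.negSucc_lt_zero]

theorem sum_natAbs_signMagnitudeEquiv_symm (p : Finset ι × (ι → ℕ)) :
    ∑ i, (signMagnitudeEquiv.symm p i).natAbs = #p.1 + ∑ i, p.2 i := by
  calc ∑ i, (signMagnitudeEquiv.symm p i).natAbs
        = ∑ i, ((if i ∈ p.1 then 1 else 0) + p.2 i) :=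
        sum_congr rfl fun i _ => by
          by_cases h : i ∈ p.1 <;> simp [signMagnitudeEquiv, h, add_comm]
    _ = #p.1 + ∑ i, p.2 i := by rw [sum_add_distrib, sum_boole]; simp

theorem card_int_fun_sum_natAbs_le (d : ℕ) :
    Nat.card {z : ι → ℤ // ∑ i, (z i).natAbs ≤ d} =
      ∑ S : Finset ι, (d + Fintype.card ι - #S).choose (Fintype.card ι) := by
  have hfin (S : Finset ι) : Finite {a : ι → ℕ // #S + ∑ i, a i ≤ d} :=
    .of_injective _ (Subtype.impEmbedding _ (fun a : ι → ℕ => ∑ i, a i ≤ d)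
      fun a h => le_of_add_le_right h).injective
  calc Nat.card {z : ι → ℤ // ∑ i, (z i).natAbs ≤ d}
      = Nat.card (Σ S : Finset ι, {a : ι → ℕ // #S + ∑ i, a i ≤ d}) :=
        Nat.card_congr <| (signMagnitudeEquiv.subtypeEquiv
          (q := fun p => #p.1 + ∑ i, p.2 i ≤ d) fun z => by
          rw [← sum_natAbs_signMagnitudeEquiv_symm, Equiv.symm_apply_apply]).trans
          (Equiv.subtypeProdEquivSigmaSubtype
            fun (S : Finset ι) (a : ι → ℕ) => #S + ∑ i, a i ≤ d)
    _ = ∑ S : Finset ι, (d + Fintype.card ι - #S).choose (Fintype.card ι) := by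
        rw [Nat.card_sigma]
        exact sum_congr rfl fun S _ => card_fun_nat_add_sum_le d (card_le_univ S)

theorem lattice_ball_count_general (D d : ℕ) :
    Nat.card {z : Fin D → ℤ // ∑ i, (z i).natAbs ≤ d} =
      ∑ k ∈ Finset.range (D + 1), D.choose k * (d + D - k).choose D := by
  rw [card_int_fun_sum_natAbs_le, ← powerset_univ,
    sum_powerset_apply_card fun k => (d + Fintype.card (Fin D) - k).choose (Fintype.card (Fin D))]
  simp

/-- For integers `D ≥ 1` and `d ≥ 0`, the number of lattice points
`z ∈ ℤ^D` with `‖z‖₁ ≤ d` equals `∑_{k=0}^{D} C(D,k)·C(d+D-k, D)`. -/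
theorem lattice_ball_count (D d : ℕ) (hD : 1 ≤ D) :
    Nat.card {z : Fin D → ℤ // ∑ i, (z i).natAbs ≤ d} =
      ∑ k ∈ Finset.range (D + 1), D.choose k * (d + D - k).choose D :=
  lattice_ball_count_general D d
end

section
/- Let B ∈ ℂ^{n×n} satisfy |B_{ij}| ≤ C·q^{d(i,j)} for constants C > 0, 0 ≤ q < 1, where d is the geodesic distance of a graph G on {1,...,n}, and suppose all level sets satisfy |L^(δ)(j)| ≤ K·δ^α for δ ≥ 1, with K, α > 0. Define B^(m) by B^(m)_{ij} = B_{ij} if d(i,j) ≤ m and 0 otherwise. Then ‖B - B^(m)‖₁ ≤ C·K·∑_{δ=m+1}^∞ δ^α q^δ, and in particular ‖B - B^(m)‖₁ → 0 as m → ∞, with the bound independent of n. -/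
/-!
In column `j` of `B - B^(m)` only the rows at distance `δ > m` from `j` survive. Each of them is
bounded by `C q^δ`, and there are at most `K δ^α` of them, so grouping the rows by their distance
bounds the column sum by `C K ∑_{δ > m} δ^α q^δ`; finite distances are `< n`, so only finitely many
groups occur, and rows at infinite distance vanish because they are bounded by `C q^s` for every
`s`. The bound is a tail of the convergent series `∑ δ^α q^δ`, hence tends to `0`.
-/

open Finset

theorem summable_rpow_mul_pow {q : ℝ} (hq0 : 0 ≤ q) (hq1 : q < 1) (α : ℝ) :
    Summable fun δ : ℕ => (δ : ℝ) ^ α * q ^ δ := by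
  have hgeom : Summable fun δ : ℕ => (δ : ℝ) ^ ⌈α⌉₊ * q ^ δ :=
    summable_pow_mul_geometric_of_norm_lt_one _ (by rwa [Real.norm_eq_abs, abs_of_nonneg hq0])
  refine (summable_nat_add_iff 1).1 <|
    ((summable_nat_add_iff 1).2 hgeom).of_nonneg_of_le (fun δ => by positivity) fun δ => ?_
  have hδ : (1 : ℝ) ≤ (δ + 1 : ℕ) := by simp
  gcongr
  calc ((δ + 1 : ℕ) : ℝ) ^ α ≤ ((δ + 1 : ℕ) : ℝ) ^ (⌈α⌉₊ : ℝ) :=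
        Real.rpow_le_rpow_of_exponent_le hδ (Nat.le_ceil α)
    _ = _ := Real.rpow_natCast _ _

theorem SimpleGraph.lt_card_of_edist_eq {V : Type*} [Fintype V] {G : SimpleGraph V} {u v : V}
    {k : ℕ} (h : G.edist u v = k) : k < Fintype.card V := by
  have hr : G.Reachable u v := G.reachable_of_edist_ne_top (by simp [h])
  obtain ⟨p, hp, hlen⟩ := hr.exists_path_of_dist
  have hk : G.dist u v = k := by exact_mod_cast hr.coe_dist_eq_edist.trans h
  exact hk ▸ hlen ▸ hp.length_lt

open Filter in
theorem nonpos_of_forall_le_mul_pow {x C q : ℝ} (hq0 : 0 ≤ q) (hq1 : q < 1)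
    (h : ∀ s : ℕ, x ≤ C * q ^ s) : x ≤ 0 := by
  have hlim : Tendsto (fun s : ℕ => C * q ^ s) atTop (nhds 0) := by
    simpa using (tendsto_pow_atTop_nhds_zero_of_lt_one hq0 hq1).const_mul C
  exact ge_of_tendsto hlim (Eventually.of_forall h)

section ColumnTail

variable {V E : Type*} [Fintype V] [SeminormedAddCommGroup E] {G : SimpleGraph V} {j : V}
  {b : V → E} {C q : ℝ}

theorem norm_le_sum_level_terms (hC : 0 ≤ C) (hq0 : 0 ≤ q) (hq1 : q < 1)
    (hdecay : ∀ i, ∀ s : ℕ, (s : ℕ∞) ≤ G.edist i j → ‖b i‖ ≤ C * q ^ s)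
    {m : ℕ} {i : V} (hi : (m : ℕ∞) < G.edist i j) :
    ‖b i‖ ≤ ∑ k ∈ range (Fintype.card V),
      if G.edist i j = ↑(m + 1 + k) then C * q ^ (m + 1 + k) else 0 := by
  have hterm_nonneg : ∀ k ∈ range (Fintype.card V),
      0 ≤ if G.edist i j = ↑(m + 1 + k) then C * q ^ (m + 1 + k) else 0 :=
    fun k _ => by split <;> positivity
  by_cases htop : G.edist i j = ⊤
  · have hb : ‖b i‖ ≤ 0 :=
      nonpos_of_forall_le_mul_pow hq0 hq1 fun s => hdecay i s (htop ▸ le_top)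
    exact hb.trans (sum_nonneg hterm_nonneg)
  obtain ⟨δ, hd⟩ := ENat.ne_top_iff_exists.1 htop
  obtain ⟨k, rfl⟩ : ∃ k, δ = m + 1 + k :=
    Nat.exists_eq_add_of_le <| by rw [← hd] at hi; exact_mod_cast hi
  have hk : k ∈ range (Fintype.card V) :=
    mem_range.2 <| by have := SimpleGraph.lt_card_of_edist_eq hd.symm; omega
  calc ‖b i‖ ≤ C * q ^ (m + 1 + k) := hdecay i _ hd.le
    _ = if G.edist i j = ↑(m + 1 + k) then C * q ^ (m + 1 + k) else 0 := (if_pos hd.symm).symm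
    _ ≤ _ := single_le_sum hterm_nonneg hk

theorem sum_norm_of_lt_edist_le {K α : ℝ} (hC : 0 ≤ C) (hq0 : 0 ≤ q) (hq1 : q < 1) (hK : 0 ≤ K)
    (hdecay : ∀ i, ∀ s : ℕ, (s : ℕ∞) ≤ G.edist i j → ‖b i‖ ≤ C * q ^ s)
    (hlevel : ∀ δ : ℕ, 1 ≤ δ → (#{i | G.edist i j = δ} : ℝ) ≤ K * (δ : ℝ) ^ α) (m : ℕ) :
    ∑ i with (m : ℕ∞) < G.edist i j, ‖b i‖ ≤
      C * K * ∑' k : ℕ, ((m + 1 + k : ℕ) : ℝ) ^ α * q ^ (m + 1 + k) := by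
  have htail : Summable fun k : ℕ => ((m + 1 + k : ℕ) : ℝ) ^ α * q ^ (m + 1 + k) :=
    (summable_rpow_mul_pow hq0 hq1 α).comp_injective (add_right_injective (m + 1))
  calc ∑ i with (m : ℕ∞) < G.edist i j, ‖b i‖
      ≤ ∑ i with (m : ℕ∞) < G.edist i j, ∑ k ∈ range (Fintype.card V),
          if G.edist i j = ↑(m + 1 + k) then C * q ^ (m + 1 + k) else 0 :=
        sum_le_sum fun i hi => norm_le_sum_level_terms hC hq0 hq1 hdecay (mem_filter.1 hi).2
    _ ≤ ∑ i, ∑ k ∈ range (Fintype.card V),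
          if G.edist i j = ↑(m + 1 + k) then C * q ^ (m + 1 + k) else 0 :=
        sum_le_sum_of_subset_of_nonneg (filter_subset _ _) fun i _ _ =>
          sum_nonneg fun k _ => by split <;> positivity
    _ = ∑ k ∈ range (Fintype.card V),
          (#{i | G.edist i j = ↑(m + 1 + k)} : ℝ) * (C * q ^ (m + 1 + k)) := by
        rw [sum_comm]
        refine sum_congr rfl fun k _ => ?_
        rw [← sum_filter, sum_const, nsmul_eq_mul]
    _ ≤ ∑ k ∈ range (Fintype.card V), C * K * (((m + 1 + k : ℕ) : ℝ) ^ α * q ^ (m + 1 + k)) :=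
        sum_le_sum fun k _ => by
          have := hlevel (m + 1 + k) (by omega)
          calc _ ≤ K * ((m + 1 + k : ℕ) : ℝ) ^ α * (C * q ^ (m + 1 + k)) := by gcongr
            _ = _ := by ring
    _ ≤ C * K * ∑' k : ℕ, ((m + 1 + k : ℕ) : ℝ) ^ α * q ^ (m + 1 + k) := by
        rw [← mul_sum]
        gcongr
        exact htail.sum_le_tsum _ fun k _ => by positivity

end ColumnTail

open Filter in
theorem sparse_approx_column_bound_general (n : ℕ) (B : Matrix (Fin n) (Fin n) ℂ)
    (G : SimpleGraph (Fin n)) (C q K α : ℝ)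
    (hC : 0 < C) (hq0 : 0 ≤ q) (hq1 : q < 1) (hK : 0 < K)
    (hdecay : ∀ i j : Fin n, ∀ s : ℕ, (s : ℕ∞) ≤ G.edist i j →
      ‖B i j‖ ≤ C * q ^ s)
    (hlevel : ∀ (j : Fin n) (δ : ℕ), 1 ≤ δ →
      ((Finset.univ.filter (fun i : Fin n => G.edist i j = δ)).card : ℝ)
        ≤ K * (δ : ℝ) ^ α)
    (Bm : ℕ → Matrix (Fin n) (Fin n) ℂ)
    (hBm : ∀ (m : ℕ) (i j : Fin n),
      Bm m i j = if G.edist i j ≤ (m : ℕ∞) then B i j else 0) :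
    (∀ (m : ℕ) (j : Fin n), ∑ i, ‖B i j - Bm m i j‖ ≤
        C * K * ∑' δ : ℕ, ((m + 1 + δ : ℕ) : ℝ) ^ α * q ^ (m + 1 + δ)) ∧
      Tendsto (fun m : ℕ => C * K * ∑' δ : ℕ, ((m + 1 + δ : ℕ) : ℝ) ^ α * q ^ (m + 1 + δ))
        atTop (nhds 0) := by
  refine ⟨fun m j => ?_, ?_⟩
  · have hcol : ∑ i, ‖B i j - Bm m i j‖ = ∑ i with (m : ℕ∞) < G.edist i j, ‖B i j‖ := by
      rw [sum_filter]
      refine sum_congr rfl fun i _ => ?_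
      rw [hBm]
      split_ifs <;> simp_all [not_lt_of_ge]
    exact hcol ▸ sum_norm_of_lt_edist_le hC.le hq0 hq1 hK.le (hdecay · j) (hlevel j) m
  · have htail := (tendsto_sum_nat_add fun δ : ℕ => (δ : ℝ) ^ α * q ^ δ).comp
      (tendsto_add_atTop_nat 1)
    simpa [add_comm] using htail.const_mul (C * K)

open Filter in
/-- Let `B ∈ ℂ^{n×n}` satisfy `|B_{ij}| ≤ C·q^{d(i,j)}` (`C > 0`,
`0 ≤ q < 1`, `d` the geodesic distance of a graph `G` on the index set; the
hypothesis is phrased so that it holds for every finite `s ≤ d(i,j)`, which for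
`q < 1` is equivalent and also covers `d(i,j) = ∞`). Assume all level sets
satisfy `|L^(δ)(j)| ≤ K·δ^α` for `δ ≥ 1`. With `B^(m)` the truncation keeping
entries at distance `≤ m`, every column sum of `|B - B^(m)|` is bounded by
`C·K·∑_{δ=m+1}^∞ δ^α q^δ`, a bound independent of `n` which tends to `0`
as `m → ∞`. -/
theorem sparse_approx_column_bound (n : ℕ) (B : Matrix (Fin n) (Fin n) ℂ)
    (G : SimpleGraph (Fin n)) (C q K α : ℝ)
    (hC : 0 < C) (hq0 : 0 ≤ q) (hq1 : q < 1) (hK : 0 < K) (hα : 0 < α)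
    (hdecay : ∀ i j : Fin n, ∀ s : ℕ, (s : ℕ∞) ≤ G.edist i j →
      ‖B i j‖ ≤ C * q ^ s)
    (hlevel : ∀ (j : Fin n) (δ : ℕ), 1 ≤ δ →
      ((Finset.univ.filter (fun i : Fin n => G.edist i j = δ)).card : ℝ)
        ≤ K * (δ : ℝ) ^ α)
    (Bm : ℕ → Matrix (Fin n) (Fin n) ℂ)
    (hBm : ∀ (m : ℕ) (i j : Fin n),
      Bm m i j = if G.edist i j ≤ (m : ℕ∞) then B i j else 0) :
    (∀ (m : ℕ) (j : Fin n), ∑ i, ‖B i j - Bm m i j‖ ≤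
        C * K * ∑' δ : ℕ, ((m + 1 + δ : ℕ) : ℝ) ^ α * q ^ (m + 1 + δ)) ∧
      Tendsto (fun m : ℕ => C * K * ∑' δ : ℕ, ((m + 1 + δ : ℕ) : ℝ) ^ α * q ^ (m + 1 + δ))
        atTop (nhds 0) :=
  sparse_approx_column_bound_general n B G C q K α hC hq0 hq1 hK hdecay hlevel Bm hBm
end

section
/- Let t ≥ 1 and 0 < q < 1 with tq > 1, and let G_p be the full t-ary tree of height p with root j. Let B_p be the matrix with entries [B_p]_{ik} = q^{d(i,k)} where d is the tree graph distance, and B_p^(m) the truncation keeping entries with d(i,k) ≤ m. Then for all m < p, ‖B_p - B_p^(m)‖₁ ≥ (p - m)·(tq)^{m+1}. -/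
/-! Take the root `r` as the column. Its entry in row `i` of `B - Bm` is `q ^ depth i` when the
depth exceeds `m` and `0` otherwise, and there are `t ^ δ` rows at depth `δ`, so the column sum
is `∑_{m < δ ≤ p} (t q) ^ δ`. Since `t q ≥ 1`, each of these `p - m` terms is at least
`(t q) ^ (m + 1)`. -/

open Finset

lemma card_Ioc_mul_pow_succ_le_sum_Ioc {R : Type*} [Semiring R] [PartialOrder R]
    [IsOrderedRing R] {x : R} (hx : 1 ≤ x) (m p : ℕ) :
    ((p - m : ℕ) : R) * x ^ (m + 1) ≤ ∑ δ ∈ Ioc m p, x ^ δ := by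
  have h := card_nsmul_le_sum (Ioc m p) (x ^ ·) (x ^ (m + 1))
    fun δ hδ => pow_le_pow_right₀ hx (mem_Ioc.mp hδ).1
  rwa [Nat.card_Ioc, nsmul_eq_mul] at h

lemma sum_fin_ite_lt_eq_sum_Ioc {M : Type*} [AddCommMonoid M] (f : ℕ → M) (m p : ℕ) :
    ∑ δ : Fin (p + 1), (if m < (δ : ℕ) then f δ else 0) = ∑ δ ∈ Ioc m p, f δ := by
  rw [Fin.sum_univ_eq_sum_range (fun δ => if m < δ then f δ else 0), ← sum_filter]
  congr 1
  ext δ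
  simp only [mem_filter, mem_range, mem_Ioc]
  omega

lemma sum_sigma_fin_eq_sum_card_mul {R : Type*} [NonAssocSemiring R] {n : ℕ} (size : Fin n → ℕ)
    (f : Fin n → R) : ∑ i : (δ : Fin n) × Fin (size δ), f i.1 = ∑ δ, (size δ : R) * f δ := by
  simp only [Fintype.sum_sigma, sum_const, card_univ, Fintype.card_fin, nsmul_eq_mul]

theorem tree_no_sparse_approx_general (t p m : ℕ) (q : ℝ)
    (htq : 1 < (t : ℝ) * q)
    (dist : ((δ : Fin (p + 1)) × Fin (t ^ (δ : ℕ))) →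
      ((δ : Fin (p + 1)) × Fin (t ^ (δ : ℕ))) → ℕ)
    (r : (δ : Fin (p + 1)) × Fin (t ^ (δ : ℕ)))
    (hdepth : ∀ i, dist i r = (i.1 : ℕ))
    (B Bm : Matrix ((δ : Fin (p + 1)) × Fin (t ^ (δ : ℕ)))
      ((δ : Fin (p + 1)) × Fin (t ^ (δ : ℕ))) ℝ)
    (hB : ∀ i k, B i k = q ^ dist i k)
    (hBm : ∀ i k, Bm i k = if dist i k ≤ m then B i k else 0) :
    ∃ j, ((p - m : ℕ) : ℝ) * ((t : ℝ) * q) ^ (m + 1) ≤ ∑ i, |B i j - Bm i j| := by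
  refine ⟨r, ?_⟩
  have hcolumn : ∀ i, B i r - Bm i r = if m < (i.1 : ℕ) then q ^ (i.1 : ℕ) else 0 := by
    intro i
    rw [hBm, hB, hdepth]
    split_ifs <;> first | omega | ring
  calc ((p - m : ℕ) : ℝ) * ((t : ℝ) * q) ^ (m + 1)
      ≤ ∑ δ ∈ Ioc m p, ((t : ℝ) * q) ^ δ := card_Ioc_mul_pow_succ_le_sum_Ioc htq.le m p
    _ = ∑ i : (δ : Fin (p + 1)) × Fin (t ^ (δ : ℕ)), (B i r - Bm i r) := by
      simp only [hcolumn]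
      rw [sum_sigma_fin_eq_sum_card_mul (fun δ => t ^ (δ : ℕ))
        (fun δ => if m < (δ : ℕ) then q ^ (δ : ℕ) else 0), ← sum_fin_ite_lt_eq_sum_Ioc]
      push_cast
      simp only [mul_ite, mul_zero, mul_pow]
    _ ≤ ∑ i, |B i r - Bm i r| := sum_le_sum fun i _ => le_abs_self _

/-- Let `t ≥ 1`, `0 < q < 1` with `tq > 1`, let `G_p` be the full
`t`-ary tree of height `p` (modelled by its vertex set `Σ δ : Fin (p+1), Fin (t^δ)`:
`t^δ` nodes at each depth `δ ≤ p`), with root `r` and graph distance `dist`, so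
that `dist i r` equals the depth of `i`. Let `[B_p]_{ik} = q^{dist i k}` and let
`B_p^(m)` be the truncation keeping entries with `dist ≤ m`. Then for `m < p`
the maximum-column-sum norm satisfies `‖B_p - B_p^(m)‖₁ ≥ (p-m)·(tq)^{m+1}`,
i.e. some column sum is at least `(p-m)·(tq)^{m+1}`. -/
theorem tree_no_sparse_approx (t p m : ℕ) (q : ℝ)
    (ht : 1 ≤ t) (hq0 : 0 < q) (hq1 : q < 1) (htq : 1 < (t : ℝ) * q) (hm : m < p)
    (dist : ((δ : Fin (p + 1)) × Fin (t ^ (δ : ℕ))) →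
      ((δ : Fin (p + 1)) × Fin (t ^ (δ : ℕ))) → ℕ)
    (hsymm : ∀ i k, dist i k = dist k i)
    (r : (δ : Fin (p + 1)) × Fin (t ^ (δ : ℕ))) (hr : (r.1 : ℕ) = 0)
    (hdepth : ∀ i, dist i r = (i.1 : ℕ))
    (B Bm : Matrix ((δ : Fin (p + 1)) × Fin (t ^ (δ : ℕ)))
      ((δ : Fin (p + 1)) × Fin (t ^ (δ : ℕ))) ℝ)
    (hB : ∀ i k, B i k = q ^ dist i k)
    (hBm : ∀ i k, Bm i k = if dist i k ≤ m then B i k else 0) :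
    ∃ j, ((p - m : ℕ) : ℝ) * ((t : ℝ) * q) ^ (m + 1) ≤ ∑ i, |B i j - Bm i j| :=
  tree_no_sparse_approx_general t p m q htq dist r hdepth B Bm hB hBm
end

section
/- Let f(A) satisfy the exponential decay bound |[f(A)]_{ij}| ≤ C·q^{d(i,j)} with C > 0, 0 ≤ q < 1, where d is the geodesic distance in G(A), and let d̄ be the distance in the undirected graph |G(A)|. Let V₁,...,V_m be the color classes of a distance-2d coloring of |G(A)|, v_ℓ = ∑_{i∈V_ℓ} e_i, and define f(A)^[d] by [f(A)^[d]]_{ij} = [f(A)v_ℓ]_i if d̄(i,j) ≤ d (where j ∈ V_ℓ) and 0 if d̄(i,j) > d. Then with ε = C·q^d, for all i, j: |[f(A)]_{ij} - [f(A)^[d]]_{ij}| ≤ (|V_ℓ| - 1)·ε when d̄(i,j) ≤ d (j ∈ V_ℓ), and ≤ ε when d̄(i,j) > d. -/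
/-! A near entry `(i, j)` is approximated by the sum of row `i` over the colour class of `j`,
so the error is the sum of `F i k` over the other members `k` of that class. Since two such
vertices are more than `2d` apart, `d̄(i, j) ≤ d` forces `d̄(i, k) > d` by the triangle
inequality, and the decay bound gives `‖F i k‖ ≤ C q^d` for each of them. A far entry is
replaced by `0`, so its error is `‖F i j‖ ≤ C q^d` directly. -/

theorem SimpleGraph.lt_edist_of_edist_le_of_two_mul_lt {V : Type*} (G : SimpleGraph V)
    {i j k : V} {d : ℕ} (hij : G.edist i j ≤ d) (hkj : ((2 * d : ℕ) : ℕ∞) < G.edist k j) :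
    (d : ℕ∞) < G.edist i k := by
  by_contra! hik
  have : G.edist k j ≤ ((2 * d : ℕ) : ℕ∞) :=
    calc G.edist k j ≤ G.edist k i + G.edist i j := G.edist_triangle
      _ ≤ d + d := add_le_add (G.edist_comm ▸ hik) hij
      _ = ((2 * d : ℕ) : ℕ∞) := by push_cast; ring
  exact this.not_gt hkj

theorem norm_sub_sum_le_card_sub_one_mul {ι E : Type*} [SeminormedAddCommGroup E]
    [DecidableEq ι] {s : Finset ι} {f : ι → E} {j : ι} {ε : ℝ} (hj : j ∈ s)
    (hf : ∀ k ∈ s, k ≠ j → ‖f k‖ ≤ ε) :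
    ‖f j - ∑ k ∈ s, f k‖ ≤ ((s.card - 1 : ℕ) : ℝ) * ε := by
  rw [← Finset.add_sum_erase s f hj, sub_add_cancel_left, norm_neg,
    ← Finset.card_erase_of_mem hj, ← nsmul_eq_mul]
  refine (norm_sum_le _ _).trans (Finset.sum_le_card_nsmul _ _ _ fun k hk => ?_)
  exact hf k (Finset.mem_of_mem_erase hk) (Finset.ne_of_mem_erase hk)

theorem probing_entrywise_error_general (n m d : ℕ) (F : Matrix (Fin n) (Fin n) ℂ)
    (C q : ℝ)
    (G : SimpleGraph (Fin n))
    (dd : Fin n → Fin n → ℕ∞) (hdd : ∀ i j : Fin n, G.edist i j ≤ dd i j)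
    (hdecay : ∀ i j : Fin n, ∀ s : ℕ, (s : ℕ∞) ≤ dd i j →
      ‖F i j‖ ≤ C * q ^ s)
    (col : Fin n → Fin m)
    (hcolor : ∀ i j : Fin n, i ≠ j → col i = col j → (2 * d : ℕ) < G.edist i j)
    (Fd : Matrix (Fin n) (Fin n) ℂ)
    (hFd : ∀ i j : Fin n, Fd i j =
      if G.edist i j ≤ (d : ℕ∞) then
        ∑ k ∈ Finset.univ.filter (fun k => col k = col j), F i k
      else 0) :
    ∀ i j : Fin n,
      (G.edist i j ≤ (d : ℕ∞) →
        ‖F i j - Fd i j‖ ≤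
          (((Finset.univ.filter (fun k => col k = col j)).card - 1 : ℕ) : ℝ) *
            (C * q ^ d)) ∧
      ((d : ℕ∞) < G.edist i j →
        ‖F i j - Fd i j‖ ≤ C * q ^ d) := by
  intro i j
  have far : ∀ k, (d : ℕ∞) < G.edist i k → ‖F i k‖ ≤ C * q ^ d :=
    fun k hik => hdecay i k d (hik.le.trans (hdd i k))
  refine ⟨fun hij => ?_, fun hij => ?_⟩
  · rw [hFd, if_pos hij]
    refine norm_sub_sum_le_card_sub_one_mul (by simp) fun k hk hkj => far k ?_
    exact G.lt_edist_of_edist_le_of_two_mul_lt hij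
      (hcolor k j hkj (Finset.mem_filter.mp hk).2)
  · rw [hFd, if_neg hij.not_ge, sub_zero]
    exact far j hij

/-- Proposition: entrywise probing error bound. Let `F = f(A)`
have exponential decay `|F_{ij}| ≤ C·q^{dd(i,j)}` where `dd` is the geodesic
distance in the directed graph `G(A)` (the decay hypothesis is phrased for every
finite `s ≤ dd(i,j)`, equivalent for `q < 1` and covering `dd = ∞`); `G` is the
underlying undirected graph `|G(A)|` with distance `d̄ = G.edist ≤ dd`. Let the
color classes of a distance-`2d` coloring of `|G(A)|` be the fibers of `col`,
and let `F^[d]` be the probing approximation: `[F^[d]]_{ij} = [F v_ℓ]_i` when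
`d̄(i,j) ≤ d` (with `j ∈ V_ℓ`), and `0` when `d̄(i,j) > d`. Then with
`ε = C·q^d`: `|F_{ij} - [F^[d]]_{ij}| ≤ (|V_ℓ|-1)·ε` if `d̄(i,j) ≤ d`
(`j ∈ V_ℓ`), and `≤ ε` if `d̄(i,j) > d`. -/
theorem probing_entrywise_error (n m d : ℕ) (A F : Matrix (Fin n) (Fin n) ℂ)
    (C q : ℝ) (hC : 0 < C) (hq0 : 0 ≤ q) (hq1 : q < 1)
    (G : SimpleGraph (Fin n))
    (hG : ∀ i j : Fin n, G.Adj i j ↔ i ≠ j ∧ (A i j ≠ 0 ∨ A j i ≠ 0))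
    (dd : Fin n → Fin n → ℕ∞) (hdd : ∀ i j : Fin n, G.edist i j ≤ dd i j)
    (hdecay : ∀ i j : Fin n, ∀ s : ℕ, (s : ℕ∞) ≤ dd i j →
      ‖F i j‖ ≤ C * q ^ s)
    (col : Fin n → Fin m)
    (hcolor : ∀ i j : Fin n, i ≠ j → col i = col j → (2 * d : ℕ) < G.edist i j)
    (Fd : Matrix (Fin n) (Fin n) ℂ)
    (hFd : ∀ i j : Fin n, Fd i j =
      if G.edist i j ≤ (d : ℕ∞) then
        ∑ k ∈ Finset.univ.filter (fun k => col k = col j), F i k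
      else 0) :
    ∀ i j : Fin n,
      (G.edist i j ≤ (d : ℕ∞) →
        ‖F i j - Fd i j‖ ≤
          (((Finset.univ.filter (fun k => col k = col j)).card - 1 : ℕ) : ℝ) *
            (C * q ^ d)) ∧
      ((d : ℕ∞) < G.edist i j →
        ‖F i j - Fd i j‖ ≤ C * q ^ d) :=
  probing_entrywise_error_general n m d F C q G dd hdd hdecay col hcolor Fd hFd
end

section
/- Let A ∈ ℂ^{n×n} be β-banded, suppose |[f(A)]_{ij}| ≤ C q^{d(i,j)} with 0 < q < 1, and let f(A)^[d] be the probing approximation built from the banded coloring col(i) = ((i-1) mod (2dβ+1)) + 1 (a distance-2d coloring). Then ‖f(A) - f(A)^[d]‖₁ ≤ 2βq·(2 + 2dβ)/(1-q) · C q^d. -/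
/-! Banding gives `|i - j| ≤ β · dist_G(i, j)`, so `|F i j| ≤ C q^⌈|i - j|/β⌉`. Around any index
at most `2β` others share a value of `⌈|k - c|/β⌉`, hence summing `C q^⌈|k - c|/β⌉` over the
indices `k` with `|k - c| > dβ` gives at most `K = 2βC q^(d+1)/(1-q)`.

In column `j`, a row `i` with `dist_G(i, j) > d` has error `F i j`; a row with
`dist_G(i, j) ≤ d` has error minus the sum of `F i k` over the other members `k` of `j`'s colour
class, and since colour classes are spaced `2dβ + 1` apart these `k` satisfy `|k - i| > dβ`.
So every error entry is at most `K`; the at most `2dβ + 1` rows with `|i - j| ≤ dβ` contribute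
`(2dβ + 1)K`, and the remaining rows, all at graph distance `> d`, contribute at most `K`. -/

open Finset

def indexDist {n : ℕ} (i j : Fin n) : ℕ := Nat.dist i j

theorem indexDist_comm {n : ℕ} (i j : Fin n) : indexDist i j = indexDist j i :=
  Nat.dist_comm _ _

theorem Matrix.indexDist_le_of_ne_zero {R : Type*} [Zero R] {n β : ℕ}
    {A : Matrix (Fin n) (Fin n) R}
    (hband : ∀ i j : Fin n, (β : ℤ) < |(i : ℤ) - (j : ℤ)| → A i j = 0) {i j : Fin n}
    (h : A i j ≠ 0) : indexDist i j ≤ β := by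
  by_contra hlt
  refine h (hband i j ?_)
  unfold indexDist Nat.dist at hlt
  rw [lt_abs]
  omega

theorem Matrix.indexDist_le_of_adj {R : Type*} [Zero R] {n β : ℕ}
    {A : Matrix (Fin n) (Fin n) R}
    (hband : ∀ i j : Fin n, (β : ℤ) < |(i : ℤ) - (j : ℤ)| → A i j = 0) {G : SimpleGraph (Fin n)}
    (hG : ∀ i j : Fin n, G.Adj i j ↔ i ≠ j ∧ (A i j ≠ 0 ∨ A j i ≠ 0)) {i j : Fin n}
    (h : G.Adj i j) : indexDist i j ≤ β := by
  rcases ((hG i j).1 h).2 with hA | hA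
  · exact Matrix.indexDist_le_of_ne_zero hband hA
  · exact indexDist_comm i j ▸ Matrix.indexDist_le_of_ne_zero hband hA

theorem SimpleGraph.Walk.indexDist_le_length_mul {n β : ℕ} {G : SimpleGraph (Fin n)}
    (hG : ∀ i j, G.Adj i j → indexDist i j ≤ β) {u v : Fin n} (p : G.Walk u v) :
    indexDist u v ≤ p.length * β := by
  induction p with
  | nil => simp [indexDist]
  | @cons a b c hab p ih =>
    calc indexDist a c ≤ indexDist a b + indexDist b c := Nat.dist.triangle_inequality _ _ _
      _ ≤ β + p.length * β := add_le_add (hG a b hab) ih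
      _ = (p.cons hab).length * β := by rw [SimpleGraph.Walk.length_cons]; ring

theorem SimpleGraph.indexDist_ceilDiv_le_edist {n β : ℕ} (hβ : 0 < β) {G : SimpleGraph (Fin n)}
    (hG : ∀ i j, G.Adj i j → indexDist i j ≤ β) (u v : Fin n) :
    ((indexDist u v ⌈/⌉ β : ℕ) : ℕ∞) ≤ G.edist u v := by
  rw [SimpleGraph.edist_eq_sInf]
  refine le_sInf (Set.forall_mem_range.2 fun p => ?_)
  rw [Nat.cast_le, ceilDiv_le_iff_le_mul hβ, mul_comm]
  exact p.indexDist_le_length_mul hG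

theorem Nat.le_dist_of_mod_eq {a b M : ℕ} (h : a % M = b % M) (hne : a ≠ b) : M ≤ a.dist b := by
  rcases le_total a b with hab | hab
  · rw [Nat.dist_eq_sub_of_le hab]
    exact Nat.le_of_dvd (by omega) ((Nat.modEq_iff_dvd' hab).1 h)
  · rw [Nat.dist_eq_sub_of_le_right hab]
    exact Nat.le_of_dvd (by omega) ((Nat.modEq_iff_dvd' hab).1 h.symm)

theorem lt_indexDist_of_mod_eq {n d β : ℕ} {i j k : Fin n} (hij : indexDist i j ≤ d * β)
    (hkj : (k : ℕ) % (2 * d * β + 1) = j % (2 * d * β + 1)) (hne : k ≠ j) :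
    d * β < indexDist k i := by
  have := Nat.le_dist_of_mod_eq hkj (Fin.val_ne_of_ne hne)
  rw [mul_assoc] at this
  unfold indexDist Nat.dist at *
  omega

theorem card_filter_indexDist_le {n : ℕ} (j : Fin n) (r : ℕ) :
    #{i : Fin n | indexDist i j ≤ r} ≤ 2 * r + 1 := by
  calc #{i : Fin n | indexDist i j ≤ r}
      ≤ #(Icc ((j : ℤ) - r) (j + r)) := by
        refine card_le_card_of_injOn (fun i => (i : ℤ)) (fun i hi => ?_) fun i _ i' _ h => ?_
        · have hi : indexDist i j ≤ r := (mem_filter.1 hi).2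
          unfold indexDist Nat.dist at hi
          simp only [coe_Icc, Set.mem_Icc]
          omega
        · exact Fin.ext (by simpa using h)
    _ = 2 * r + 1 := by simp only [Int.card_Icc]; omega

theorem card_filter_indexDist_ceilDiv_eq_le {n β : ℕ} (hβ : 0 < β) (c : Fin n) (m : ℕ) :
    #{k : Fin n | indexDist k c ⌈/⌉ β = m} ≤ 2 * β := by
  set P := β * m
  calc #{k : Fin n | indexDist k c ⌈/⌉ β = m}
      ≤ #(Ioc ((P : ℤ) - β) P ∪ Ico (-(P : ℤ)) (-P + β)) := by
        refine card_le_card_of_injOn (fun k => (k : ℤ) - c) (fun k hk => ?_) ?_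
        · have hk : indexDist k c ⌈/⌉ β = m := (mem_filter.1 hk).2
          have hle : indexDist k c ≤ P := (ceilDiv_le_iff_le_mul hβ).1 hk.le
          have hlt : m ≠ 0 → P - β < indexDist k c := fun hm => by
            rw [← Nat.mul_sub_one]
            exact lt_of_not_ge fun h => by have := (ceilDiv_le_iff_le_mul hβ).2 h; omega
          simp only [coe_union, coe_Ioc, coe_Ico, Set.mem_union, Set.mem_Ioc, Set.mem_Ico]
          unfold indexDist Nat.dist at hle hlt
          rcases Nat.eq_zero_or_pos m with rfl | hm
          · simp only [P, mul_zero] at hle ⊢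
            omega
          · have := hlt hm.ne'
            omega
        · intro k _ k' _ h
          exact Fin.ext (by simpa using h)
    _ ≤ 2 * β := by
        refine (card_union_le _ _).trans ?_
        simp only [Int.card_Ioc, Int.card_Ico]
        omega

theorem sum_pow_le_of_card_fiber_le {ι : Type*} (s : Finset ι) (f : ι → ℕ) {a N : ℕ} {q : ℝ}
    (hq0 : 0 ≤ q) (hq1 : q < 1) (ha : ∀ k ∈ s, a ≤ f k)
    (hN : ∀ m, #{k ∈ s | f k = m} ≤ N) :
    ∑ k ∈ s, q ^ f k ≤ N * (q ^ a / (1 - q)) := by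
  have hmaps : ∀ k ∈ s, f k ∈ Ico a (s.sup f + 1) := fun k hk =>
    mem_Ico.2 ⟨ha k hk, Nat.lt_succ_of_le (le_sup hk)⟩
  calc ∑ k ∈ s, q ^ f k
      = ∑ m ∈ Ico a (s.sup f + 1), ∑ k ∈ s with f k = m, q ^ f k :=
        (sum_fiberwise_of_maps_to hmaps _).symm
    _ = ∑ m ∈ Ico a (s.sup f + 1), #{k ∈ s | f k = m} * q ^ m := by
        refine sum_congr rfl fun m _ => ?_
        rw [sum_congr rfl fun k hk => by rw [(mem_filter.1 hk).2], sum_const, nsmul_eq_mul]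
    _ ≤ ∑ m ∈ Ico a (s.sup f + 1), N * q ^ m := by
        gcongr with m
        exact_mod_cast hN m
    _ ≤ N * (q ^ a / (1 - q)) := by
        rw [← mul_sum]
        gcongr
        exact geom_sum_Ico_le_of_lt_one hq0 hq1

theorem sum_norm_le_of_lt_indexDist {E : Type*} [SeminormedAddCommGroup E] {n β d : ℕ}
    (hβ : 0 < β) {C q : ℝ} (hC : 0 ≤ C) (hq0 : 0 ≤ q) (hq1 : q < 1) (c : Fin n)
    (g : Fin n → E) (s : Finset (Fin n)) (hg : ∀ k ∈ s, ‖g k‖ ≤ C * q ^ (indexDist k c ⌈/⌉ β))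
    (hs : ∀ k ∈ s, d * β < indexDist k c) :
    ∑ k ∈ s, ‖g k‖ ≤ C * (2 * β * (q ^ (d + 1) / (1 - q))) := by
  have hfiber : ∀ m, #(s.filter fun k : Fin n => indexDist k c ⌈/⌉ β = m) ≤ 2 * β := fun m =>
    (card_le_card (filter_subset_filter _ (subset_univ s))).trans
      (card_filter_indexDist_ceilDiv_eq_le hβ c m)
  have hlevel : ∀ k ∈ s, d + 1 ≤ indexDist k c ⌈/⌉ β := fun k hk =>
    Nat.succ_le_of_lt <| lt_of_not_ge fun h =>
      (hs k hk).not_ge (mul_comm β d ▸ (ceilDiv_le_iff_le_mul hβ).1 h)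
  calc ∑ k ∈ s, ‖g k‖ ≤ C * ∑ k ∈ s, q ^ (indexDist k c ⌈/⌉ β) := by
        rw [mul_sum]; exact sum_le_sum hg
    _ ≤ C * (2 * β * (q ^ (d + 1) / (1 - q))) := by
        gcongr
        exact_mod_cast sum_pow_le_of_card_fiber_le s _ hq0 hq1 hlevel hfiber

theorem norm_sub_sum_mod_eq_le {E : Type*} [SeminormedAddCommGroup E] {n β d : ℕ}
    (hβ : 0 < β) {C q : ℝ} (hC : 0 ≤ C) (hq0 : 0 ≤ q) (hq1 : q < 1) {i j : Fin n}
    (hij : indexDist i j ≤ d * β) (f : Fin n → E)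
    (hf : ∀ k, ‖f k‖ ≤ C * q ^ (indexDist k i ⌈/⌉ β)) :
    ‖f j - ∑ k ∈ univ.filter fun k : Fin n => (k : ℕ) % (2 * d * β + 1) = j % (2 * d * β + 1),
      f k‖
      ≤ C * (2 * β * (q ^ (d + 1) / (1 - q))) := by
  have hj : j ∈ univ.filter fun k : Fin n => (k : ℕ) % (2 * d * β + 1) = j % (2 * d * β + 1) := by
    simp
  rw [← sum_erase_add _ _ hj, sub_add_cancel_right, norm_neg]
  refine (norm_sum_le _ _).trans <|
    sum_norm_le_of_lt_indexDist hβ hC hq0 hq1 i f _ (fun k _ => hf k) fun k hk => ?_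
  obtain ⟨hne, hk⟩ := mem_erase.1 hk
  exact lt_indexDist_of_mod_eq hij (mem_filter.1 hk).2 hne

/-- Corollary: 1-norm probing bound for banded matrices. Let
`A ∈ ℂ^{n×n}` be `β`-banded, let `F = f(A)` satisfy the decay
`|F_{ij}| ≤ C·q^{dd(i,j)}` (`0 < q < 1`) w.r.t. the geodesic distance `dd` of
`G(A)` (which dominates the undirected distance `G.edist`), and let `F^[d]` be
the probing approximation built from the banded distance-`2d` coloring
`col(i) = ((i-1) mod (2dβ+1)) + 1` (0-based: `i mod (2dβ+1)`). Then
`‖F - F^[d]‖₁ ≤ 2βq·(2+2dβ)/(1-q) · C·q^d`, i.e. every column sum of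
`|F - F^[d]|` is bounded by this quantity. -/
theorem probing_banded_one_norm (n β d : ℕ) (hβ : 1 ≤ β)
    (A F : Matrix (Fin n) (Fin n) ℂ) (C q : ℝ)
    (hC : 0 < C) (hq0 : 0 < q) (hq1 : q < 1)
    (hband : ∀ i j : Fin n, (β : ℤ) < |(i : ℤ) - (j : ℤ)| → A i j = 0)
    (G : SimpleGraph (Fin n))
    (hG : ∀ i j : Fin n, G.Adj i j ↔ i ≠ j ∧ (A i j ≠ 0 ∨ A j i ≠ 0))
    (dd : Fin n → Fin n → ℕ∞) (hdd : ∀ i j : Fin n, G.edist i j ≤ dd i j)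
    (hdecay : ∀ i j : Fin n, ∀ s : ℕ, (s : ℕ∞) ≤ dd i j →
      ‖F i j‖ ≤ C * q ^ s)
    (col : Fin n → ℕ) (hcol : ∀ i : Fin n, col i = (i : ℕ) % (2 * d * β + 1))
    (Fd : Matrix (Fin n) (Fin n) ℂ)
    (hFd : ∀ i j : Fin n, Fd i j =
      if G.edist i j ≤ (d : ℕ∞) then
        ∑ k ∈ Finset.univ.filter (fun k => col k = col j), F i k
      else 0) :
    ∀ j : Fin n, ∑ i, ‖F i j - Fd i j‖ ≤
      2 * (β : ℝ) * q * (2 + 2 * (d : ℝ) * (β : ℝ)) / (1 - q) * (C * q ^ d) := by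
  intro j
  have hdist := G.indexDist_ceilDiv_le_edist hβ fun _ _ => Matrix.indexDist_le_of_adj hband hG
  have hF : ∀ i k : Fin n, ‖F i k‖ ≤ C * q ^ (indexDist i k ⌈/⌉ β) := fun i k =>
    hdecay i k _ ((hdist i k).trans (hdd i k))
  have hnear : ∀ i, G.edist i j ≤ d → indexDist i j ≤ d * β := fun i hi => by
    rw [mul_comm, ← ceilDiv_le_iff_le_mul hβ]
    exact_mod_cast (hdist i j).trans hi
  set K := C * (2 * β * (q ^ (d + 1) / (1 - q)))
  have hK : C * q ^ (d + 1) ≤ K := by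
    refine mul_le_mul_of_nonneg_left ?_ hC.le
    rw [mul_div_assoc', le_div_iff₀ (by linarith)]
    nlinarith [pow_pos hq0 (d + 1), (show (1 : ℝ) ≤ β by exact_mod_cast hβ)]
  have hentry : ∀ i, ‖F i j - Fd i j‖ ≤ K := fun i => by
    rw [hFd]
    split_ifs with hi
    · simpa only [hcol] using norm_sub_sum_mod_eq_le hβ hC.le hq0.le hq1 (hnear i hi) (F i)
        fun k => indexDist_comm k i ▸ hF i k
    · rw [sub_zero]
      exact (hdecay i j (d + 1) ((Order.add_one_le_of_lt (not_le.1 hi)).trans (hdd i j))).trans hK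
  have hfar : ∑ i with ¬ indexDist i j ≤ d * β, ‖F i j - Fd i j‖ ≤ K := by
    refine le_of_eq_of_le (sum_congr rfl fun i hi => ?_) <| sum_norm_le_of_lt_indexDist hβ hC.le
      hq0.le hq1 j (fun i => F i j) _ (fun i _ => hF i j) fun i hi => not_le.1 (mem_filter.1 hi).2
    rw [hFd, if_neg fun h => (mem_filter.1 hi).2 (hnear i h), sub_zero]
  calc ∑ i, ‖F i j - Fd i j‖
      = ∑ i with indexDist i j ≤ d * β, ‖F i j - Fd i j‖
        + ∑ i with ¬ indexDist i j ≤ d * β, ‖F i j - Fd i j‖ :=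
        (sum_filter_add_sum_filter_not _ _ _).symm
    _ ≤ #{i | indexDist i j ≤ d * β} * K + K := by
        gcongr
        simpa only [nsmul_eq_mul] using sum_le_card_nsmul _ _ _ fun i _ => hentry i
    _ ≤ (2 * (d * β) + 1 : ℕ) * K + K := by
        gcongr
        exact card_filter_indexDist_le j _
    _ = _ := by push_cast; ring
end

section
/- Suppose |B_{ij}| ≤ C q^{d(i,j)} with 0 ≤ q < 1, where d is graph distance in G, and let V₁,...,V_m be the color classes of a distance-d coloring of G. Then |tr(B) − ∑_ℓ v_ℓᴴ B v_ℓ| ≤ ∑_{ℓ=1}^m |V_ℓ|(|V_ℓ|−1)·C q^d, where v_ℓ = ∑_{i∈V_ℓ} e_i. -/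
/-!
Probing with the indicator vector `v_ℓ` of a colour class `V_ℓ` computes the whole block sum
`∑_{i,j ∈ V_ℓ} B_ij`, so subtracting the trace leaves only the off-diagonal entries of the
diagonal blocks. Two distinct nodes of one colour class are more than `d` apart, so each such entry
is bounded by `C q^d`, and `V_ℓ` contributes `|V_ℓ|(|V_ℓ| - 1)` of them.
-/

open Finset Matrix

variable {ι κ R : Type*}

lemma star_indicator_dotProduct_mulVec_indicator [Fintype ι] [NonAssocSemiring R] [StarRing R]
    (B : Matrix ι ι R) (p : ι → Prop) [DecidablePred p] :
    star (fun i => if p i then (1 : R) else 0) ⬝ᵥ B *ᵥ (fun i => if p i then 1 else 0) =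
      ∑ i ∈ univ.filter p, ∑ j ∈ univ.filter p, B i j := by
  simp only [sum_filter, dotProduct, mulVec, Pi.star_apply, apply_ite star, star_one, star_zero,
    ite_mul, one_mul, zero_mul, mul_ite, mul_one, mul_zero]

lemma sum_sum_sub_sum_diag [DecidableEq ι] {M : Type*} [AddCommGroup M] (s : Finset ι)
    (f : ι → ι → M) :
    ∑ i ∈ s, ∑ j ∈ s, f i j - ∑ i ∈ s, f i i = ∑ i ∈ s, ∑ j ∈ s.erase i, f i j := by
  rw [← sum_sub_distrib]
  exact sum_congr rfl fun i hi => (sum_erase_eq_sub hi).symm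

lemma norm_sum_sum_erase_le [DecidableEq ι] {E : Type*} [SeminormedAddCommGroup E]
    (s : Finset ι) (f : ι → ι → E) (c : ℝ) (hf : ∀ i ∈ s, ∀ j ∈ s, i ≠ j → ‖f i j‖ ≤ c) :
    ‖∑ i ∈ s, ∑ j ∈ s.erase i, f i j‖ ≤ #s * (#s - 1 : ℕ) * c := by
  calc ‖∑ i ∈ s, ∑ j ∈ s.erase i, f i j‖
      ≤ ∑ i ∈ s, ∑ _j ∈ s.erase i, c := by
        refine norm_sum_le_of_le _ fun i hi => norm_sum_le_of_le _ fun j hj => ?_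
        exact hf i hi j (mem_of_mem_erase hj) (ne_of_mem_erase hj).symm
    _ = #s * (#s - 1 : ℕ) * c := by
        rw [sum_congr rfl fun i hi => by rw [sum_const, card_erase_of_mem hi], sum_const]
        simp only [nsmul_eq_mul]
        ring

lemma norm_trace_sub_sum_probe_le [Fintype ι] [DecidableEq ι] [Fintype κ] [DecidableEq κ]
    [NormedRing R] [StarRing R] (B : Matrix ι ι R) (col : ι → κ) (c : ℝ)
    (hB : ∀ i j, i ≠ j → col i = col j → ‖B i j‖ ≤ c) :
    ‖B.trace - ∑ ℓ, star (fun i => if col i = ℓ then (1 : R) else 0) ⬝ᵥ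
        B *ᵥ (fun i => if col i = ℓ then 1 else 0)‖ ≤
      ∑ ℓ, (#(univ.filter (col · = ℓ)) : ℝ) * (#(univ.filter (col · = ℓ)) - 1 : ℕ) * c := by
  have htrace : B.trace = ∑ ℓ, ∑ i ∈ univ.filter (col · = ℓ), B i i :=
    (sum_fiberwise univ col fun i => B i i).symm
  simp only [star_indicator_dotProduct_mulVec_indicator, htrace]
  rw [← norm_neg, neg_sub, ← sum_sub_distrib]
  refine norm_sum_le_of_le _ fun ℓ _ => ?_
  rw [sum_sum_sub_sum_diag _ B]
  refine norm_sum_sum_erase_le _ _ c fun i hi j hj hij => hB i j hij ?_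
  rw [(mem_filter.mp hi).2, (mem_filter.mp hj).2]

theorem probing_trace_error_bound_general (n m d : ℕ) (B : Matrix (Fin n) (Fin n) ℂ)
    (C q : ℝ)
    (G : SimpleGraph (Fin n))
    (hdecay : ∀ i j : Fin n, ∀ s : ℕ, (s : ℕ∞) ≤ G.edist i j →
      ‖B i j‖ ≤ C * q ^ s)
    (col : Fin n → Fin m)
    (hcolor : ∀ i j : Fin n, i ≠ j → col i = col j → (d : ℕ) < G.edist i j)
    (v : Fin m → Fin n → ℂ)
    (hv : ∀ (ℓ : Fin m) (i : Fin n), v ℓ i = if col i = ℓ then 1 else 0) :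
    ‖B.trace - ∑ ℓ, (star (v ℓ)) ⬝ᵥ B.mulVec (v ℓ)‖ ≤
      ∑ ℓ : Fin m, ((Finset.univ.filter (fun i => col i = ℓ)).card : ℝ) *
        (((Finset.univ.filter (fun i => col i = ℓ)).card - 1 : ℕ) : ℝ) *
          (C * q ^ d) := by
  obtain rfl : v = fun ℓ i => if col i = ℓ then 1 else 0 := funext₂ hv
  exact norm_trace_sub_sum_probe_le B col _ fun i j hij hcol =>
    hdecay i j d (hcolor i j hij hcol).le

open Matrix in
/-- Suppose `|B_{ij}| ≤ C·q^{d(i,j)}` with `0 ≤ q < 1`, where `d`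
is the graph distance in `G` (phrased for every finite `s ≤ d(i,j)`, which for
`q < 1` is equivalent and also covers unreachable pairs), and let `V₁,…,V_m` be
the color classes (fibers of `col`) of a distance-`d` coloring of `G`. Then with
`v_ℓ = ∑_{i∈V_ℓ} e_i`,
`|tr(B) − ∑_ℓ v_ℓᴴ B v_ℓ| ≤ ∑_ℓ |V_ℓ|(|V_ℓ|−1)·C·q^d`. -/
theorem probing_trace_error_bound (n m d : ℕ) (B : Matrix (Fin n) (Fin n) ℂ)
    (C q : ℝ) (hC : 0 < C) (hq0 : 0 ≤ q) (hq1 : q < 1)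
    (G : SimpleGraph (Fin n))
    (hdecay : ∀ i j : Fin n, ∀ s : ℕ, (s : ℕ∞) ≤ G.edist i j →
      ‖B i j‖ ≤ C * q ^ s)
    (col : Fin n → Fin m)
    (hcolor : ∀ i j : Fin n, i ≠ j → col i = col j → (d : ℕ) < G.edist i j)
    (v : Fin m → Fin n → ℂ)
    (hv : ∀ (ℓ : Fin m) (i : Fin n), v ℓ i = if col i = ℓ then 1 else 0) :
    ‖B.trace - ∑ ℓ, (star (v ℓ)) ⬝ᵥ B.mulVec (v ℓ)‖ ≤
      ∑ ℓ : Fin m, ((Finset.univ.filter (fun i => col i = ℓ)).card : ℝ) *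
        (((Finset.univ.filter (fun i => col i = ℓ)).card - 1 : ℕ) : ℝ) *
          (C * q ^ d) :=
  probing_trace_error_bound_general n m d B C q G hdecay col hcolor v hv
end

section
/- Let A ∈ ℂ^{n×n} be β-banded with |[f(A)]_{ij}| ≤ C q^{d(i,j)}, 0 < q < 1, where in G(A) the distance between nodes i = ℓ + r(dβ+1) and j = ℓ + s(dβ+1) in the same color class of the banded distance-d coloring col(i) = ((i-1) mod (dβ+1)) + 1 satisfies d(i,j) ≥ |r−s|·d. Then the probing trace estimate T(f(A)) = ∑_ℓ v_ℓᴴ f(A) v_ℓ satisfies |tr(f(A)) − T(f(A))| ≤ 2n·C·q^d/(1−q^d). -/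
/-!
The probing estimate equals the trace plus the sum of the off-diagonal entries `F i j` with
`i ≡ j (mod dβ+1)`. For fixed `i`, such `j ≠ i` lie in pairwise distinct blocks at nonzero offsets
`r - s ∈ ℤ`, where `|F i j| ≤ C (q^d)^|r - s|`; the sum of `x^|t|` over `t ≠ 0` is `2x/(1-x)`,
so each of the `n` rows contributes at most `2C q^d/(1 - q^d)`.
-/

open Finset Matrix

theorem hasSum_pow_natAbs {x : ℝ} (h0 : 0 ≤ x) (h1 : x < 1) :
    HasSum (fun t : ℤ => x ^ t.natAbs) ((1 + x) / (1 - x)) := by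
  have hnonneg : HasSum (fun k : ℕ => x ^ (k : ℤ).natAbs) (1 - x)⁻¹ := by
    simpa only [Int.natAbs_natCast] using hasSum_geometric_of_lt_one h0 h1
  have hneg : HasSum (fun k : ℕ => x ^ (-(k + 1 : ℤ)).natAbs) (x * (1 - x)⁻¹) := by
    have (k : ℕ) : (-(k + 1 : ℤ)).natAbs = k + 1 := by omega
    simpa only [this, pow_succ'] using (hasSum_geometric_of_lt_one h0 h1).mul_left x
  rw [div_eq_mul_inv, add_mul, one_mul]
  exact HasSum.of_nat_of_neg_add_one (f := fun t : ℤ => x ^ t.natAbs) hnonneg hneg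

theorem sum_pow_natAbs_le_of_zero_notMem {x : ℝ} (h0 : 0 ≤ x) (h1 : x < 1) {T : Finset ℤ}
    (hT : 0 ∉ T) : ∑ t ∈ T, x ^ t.natAbs ≤ 2 * x / (1 - x) := by
  have hle := sum_le_hasSum (insert 0 T) (fun t _ => pow_nonneg h0 _) (hasSum_pow_natAbs h0 h1)
  rw [sum_insert hT, Int.natAbs_zero, pow_zero] at hle
  have hrhs : (1 + x) / (1 - x) - 1 = 2 * x / (1 - x) := by
    field_simp [(sub_pos.2 h1).ne']
    ring
  linarith

theorem sum_erase_pow_natAbs_sub_le {ι : Type*} [DecidableEq ι] {x : ℝ} (h0 : 0 ≤ x)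
    (h1 : x < 1) {S : Finset ι} {r : ι → ℤ} (hr : Set.InjOn r S) {i : ι} (hi : i ∈ S) :
    ∑ j ∈ S.erase i, x ^ (r i - r j).natAbs ≤ 2 * x / (1 - x) := by
  have hinj : Set.InjOn (fun j => r i - r j) (S.erase i) := fun j hj k hk h =>
    hr (mem_of_mem_erase hj) (mem_of_mem_erase hk) (sub_right_injective h)
  rw [← sum_image (f := fun t : ℤ => x ^ t.natAbs) hinj]
  refine sum_pow_natAbs_le_of_zero_notMem h0 h1 ?_
  simp only [mem_image, mem_erase, sub_eq_zero, not_exists, not_and]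
  exact fun j ⟨hji, hj⟩ h => hji (hr hj hi h.symm)

section Probing

variable {ι κ R : Type*} [DecidableEq κ]

def probingVector [Zero R] [One R] (c : ι → κ) (ℓ : κ) : ι → R :=
  fun i => if c i = ℓ then 1 else 0

theorem sum_star_probingVector_dotProduct_mulVec [Fintype ι] [Semiring R] [StarRing R]
    (F : Matrix ι ι R) (c : ι → κ) (L : Finset κ) (hL : ∀ i, c i ∈ L) :
    ∑ ℓ ∈ L, star (probingVector c ℓ) ⬝ᵥ F *ᵥ probingVector c ℓ =
      ∑ i, ∑ j ∈ univ.filter (fun j => c i = c j), F i j := by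
  simp only [probingVector, dotProduct, mulVec, Pi.star_apply, apply_ite star, star_one, star_zero,
    ite_mul, one_mul, zero_mul, mul_sum, mul_ite, mul_one, mul_zero]
  rw [sum_comm]
  refine sum_congr rfl fun i _ => ?_
  rw [sum_comm, sum_filter]
  refine sum_congr rfl fun j _ => ?_
  simp [hL]

theorem sum_star_probingVector_dotProduct_mulVec_eq_trace_add [Fintype ι] [DecidableEq ι]
    [Semiring R] [StarRing R] (F : Matrix ι ι R) (c : ι → κ) (L : Finset κ) (hL : ∀ i, c i ∈ L) :
    ∑ ℓ ∈ L, star (probingVector c ℓ) ⬝ᵥ F *ᵥ probingVector c ℓ =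
      F.trace + ∑ i, ∑ j ∈ (univ.filter (fun j => c i = c j)).erase i, F i j := by
  rw [sum_star_probingVector_dotProduct_mulVec F c L hL, trace, ← sum_add_distrib]
  exact sum_congr rfl fun i _ => (add_sum_erase _ (F i) (by simp)).symm

end Probing

theorem injOn_ediv_of_mod_eq {n m : ℕ} (i : Fin n) :
    Set.InjOn (fun j : Fin n => ((j : ℕ) : ℤ) / m)
      (univ.filter (fun j : Fin n => (i : ℕ) % m = (j : ℕ) % m)) := by
  intro j hj k hk h
  simp only [coe_filter, mem_univ, true_and, Set.mem_ofPred_eq] at hj hk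
  have hdiv : (j : ℕ) / m = (k : ℕ) / m := by
    simpa only [← Int.natCast_ediv, Nat.cast_inj] using h
  exact Fin.ext (Nat.ext_div_modEq hdiv (hj.symm.trans hk))

theorem probing_trace_banded_general (n β d : ℕ) (hd : 1 ≤ d)
    (F : Matrix (Fin n) (Fin n) ℂ) (C q : ℝ)
    (hC : 0 < C) (hq0 : 0 < q) (hq1 : q < 1)
    (dd : Fin n → Fin n → ℕ∞)
    (hdecay : ∀ i j : Fin n, ∀ s : ℕ, (s : ℕ∞) ≤ dd i j →
      ‖F i j‖ ≤ C * q ^ s)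
    (hdist : ∀ i j : Fin n, (i : ℕ) % (d * β + 1) = (j : ℕ) % (d * β + 1) →
      ((((i : ℕ) / (d * β + 1) : ℤ) - ((j : ℕ) / (d * β + 1) : ℤ)).natAbs * d : ℕ)
        ≤ dd i j)
    (v : ℕ → Fin n → ℂ)
    (hv : ∀ (ℓ : ℕ) (i : Fin n), v ℓ i = if (i : ℕ) % (d * β + 1) = ℓ then 1 else 0) :
    ‖F.trace -
        ∑ ℓ ∈ Finset.range (d * β + 1), (star (v ℓ)) ⬝ᵥ F.mulVec (v ℓ)‖ ≤
      2 * (n : ℝ) * C * q ^ d / (1 - q ^ d) := by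
  set S : Fin n → Finset (Fin n) := fun i => univ.filter fun j : Fin n =>
    (i : ℕ) % (d * β + 1) = (j : ℕ) % (d * β + 1)
  have hS (i : Fin n) : Set.InjOn (fun j : Fin n => ((j : ℕ) / (d * β + 1) : ℤ)) (S i) := by
    simpa only [Nat.cast_add, Nat.cast_mul, Nat.cast_one] using
      injOn_ediv_of_mod_eq (m := d * β + 1) i
  have hvec : v = probingVector (fun i : Fin n => (i : ℕ) % (d * β + 1)) := funext₂ hv
  have hqd0 : 0 ≤ q ^ d := pow_nonneg hq0.le d
  have hqd1 : q ^ d < 1 := pow_lt_one₀ hq0.le hq1 (by omega)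
  rw [hvec, sum_star_probingVector_dotProduct_mulVec_eq_trace_add F _ _
    (fun i => mem_range.2 (Nat.mod_lt _ (by omega))), sub_add_cancel_left, norm_neg]
  calc ‖∑ i, ∑ j ∈ (S i).erase i, F i j‖
      ≤ ∑ i, ∑ j ∈ (S i).erase i, ‖F i j‖ :=
        (norm_sum_le _ _).trans (sum_le_sum fun i _ => norm_sum_le _ _)
    _ ≤ ∑ i, ∑ j ∈ (S i).erase i,
          C * (q ^ d) ^ (((i : ℕ) / (d * β + 1) : ℤ) - ((j : ℕ) / (d * β + 1) : ℤ)).natAbs := by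
        refine sum_le_sum fun i _ => sum_le_sum fun j hj => ?_
        rw [← pow_mul']
        exact hdecay i j _ (hdist i j (mem_filter.1 (mem_of_mem_erase hj)).2)
    _ ≤ ∑ i : Fin n, C * (2 * q ^ d / (1 - q ^ d)) := by
        refine sum_le_sum fun i _ => ?_
        rw [← mul_sum]
        exact mul_le_mul_of_nonneg_left
          (sum_erase_pow_natAbs_sub_le hqd0 hqd1 (hS i) (by simp [S])) hC.le
    _ = 2 * (n : ℝ) * C * q ^ d / (1 - q ^ d) := by
        rw [sum_const, card_univ, Fintype.card_fin, nsmul_eq_mul]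
        ring

open Matrix in
/-- Let `A ∈ ℂ^{n×n}` be `β`-banded, let `F = f(A)` satisfy
`|F_{ij}| ≤ C·q^{dd(i,j)}` (`0 < q < 1`, `dd` the geodesic distance in `G(A)`;
phrased for every finite `s ≤ dd(i,j)`), and suppose that for nodes
`i = ℓ + r(dβ+1)`, `j = ℓ + s(dβ+1)` in the same class of the banded
distance-`d` coloring `col(i) = ((i-1) mod (dβ+1)) + 1` (0-based:
`i mod (dβ+1)`) one has `dd(i,j) ≥ |r−s|·d`. Then the probing trace estimate
`T(F) = ∑_ℓ v_ℓᴴ F v_ℓ` satisfies `|tr(F) − T(F)| ≤ 2n·C·q^d/(1−q^d)`. -/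
theorem probing_trace_banded (n β d : ℕ) (hβ : 1 ≤ β) (hd : 1 ≤ d)
    (A F : Matrix (Fin n) (Fin n) ℂ) (C q : ℝ)
    (hC : 0 < C) (hq0 : 0 < q) (hq1 : q < 1)
    (hband : ∀ i j : Fin n, (β : ℤ) < |(i : ℤ) - (j : ℤ)| → A i j = 0)
    (dd : Fin n → Fin n → ℕ∞)
    (hdecay : ∀ i j : Fin n, ∀ s : ℕ, (s : ℕ∞) ≤ dd i j →
      ‖F i j‖ ≤ C * q ^ s)
    (hdist : ∀ i j : Fin n, (i : ℕ) % (d * β + 1) = (j : ℕ) % (d * β + 1) →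
      ((((i : ℕ) / (d * β + 1) : ℤ) - ((j : ℕ) / (d * β + 1) : ℤ)).natAbs * d : ℕ)
        ≤ dd i j)
    (v : ℕ → Fin n → ℂ)
    (hv : ∀ (ℓ : ℕ) (i : Fin n), v ℓ i = if (i : ℕ) % (d * β + 1) = ℓ then 1 else 0) :
    ‖F.trace -
        ∑ ℓ ∈ Finset.range (d * β + 1), (star (v ℓ)) ⬝ᵥ F.mulVec (v ℓ)‖ ≤
      2 * (n : ℝ) * C * q ^ d / (1 - q ^ d) :=
  probing_trace_banded_general n β d hd F C q hC hq0 hq1 dd hdecay hdist v hv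
end
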